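/- Let $r \ge 1$ and $n \ge 10r$ be integers. Then $\binom{n+r+1}{2r} < \dfrac{(n-2r+1)^{\,n-2r+1}}{(n-2r+1)!}$, where the inequality is between rational numbers. -/
import Mathlib

open Finset

theorem key_numerical_inequality (n r : ℕ) (hr : 1 ≤ r) (hn : 10 * r ≤ n) :
    ((n + r + 1).choose (2 * r) : ℚ) <
      ((n - 2 * r + 1 : ℕ) : ℚ) ^ (n - 2 * r + 1) / ((n - 2 * r + 1).factorial : ℚ) := by
  set m : ℕ := n - 2 * r + 1 with hm
  have hm8 : 8 * r + 1 ≤ m := by omega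
  have hkey : (n + r + 1).choose (2 * r) * m.factorial < m ^ m := by
    -- split m! into (2r)! * A * B
    have hsplit1 : (∏ x ∈ Ico 1 (2 * r + 1), x) * (∏ x ∈ Ico (2 * r + 1) (m + 1), x)
        = ∏ x ∈ Ico 1 (m + 1), x :=
      Finset.prod_Ico_consecutive _ (by omega) (by omega)
    have hsplit2 : (∏ x ∈ Ico (2 * r + 1) (4 * r + 1), x) * (∏ x ∈ Ico (4 * r + 1) (m + 1), x)
        = ∏ x ∈ Ico (2 * r + 1) (m + 1), x :=
      Finset.prod_Ico_consecutive _ (by omega) (by omega)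
    have hmfac : m.factorial = (2 * r).factorial *
        ((∏ x ∈ Ico (2 * r + 1) (4 * r + 1), x) * (∏ x ∈ Ico (4 * r + 1) (m + 1), x)) := by
      rw [hsplit2, ← Finset.prod_Ico_id_eq_factorial, ← Finset.prod_Ico_id_eq_factorial, hsplit1]
    have hA : 2 ^ (2 * r) * ∏ x ∈ Ico (2 * r + 1) (4 * r + 1), x ≤ m ^ (2 * r) := by
      have : 2 ^ (2 * r) * ∏ x ∈ Ico (2 * r + 1) (4 * r + 1), x
          = ∏ x ∈ Ico (2 * r + 1) (4 * r + 1), 2 * x := by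
        rw [Finset.prod_mul_distrib, Finset.prod_const, Nat.card_Ico]
        congr 2
        omega
      rw [this]
      calc ∏ x ∈ Ico (2 * r + 1) (4 * r + 1), 2 * x
          ≤ m ^ (Ico (2 * r + 1) (4 * r + 1)).card := by
            apply Finset.prod_le_pow_card
            intro x hx
            simp only [Finset.mem_Ico] at hx
            omega
        _ = m ^ (2 * r) := by rw [Nat.card_Ico]; congr 1; omega
    have hB : (∏ x ∈ Ico (4 * r + 1) (m + 1), x) ≤ m ^ (m - 4 * r) := by
      calc (∏ x ∈ Ico (4 * r + 1) (m + 1), x)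
          ≤ m ^ (Ico (4 * r + 1) (m + 1)).card := by
            apply Finset.prod_le_pow_card
            intro x hx
            simp only [Finset.mem_Ico] at hx
            omega
        _ = m ^ (m - 4 * r) := by rw [Nat.card_Ico]; congr 1; omega
    have hposA : 0 < ∏ x ∈ Ico (2 * r + 1) (4 * r + 1), x :=
      Finset.prod_pos fun x hx => by simp only [Finset.mem_Ico] at hx; omega
    have hposB : 0 < ∏ x ∈ Ico (4 * r + 1) (m + 1), x :=
      Finset.prod_pos fun x hx => by simp only [Finset.mem_Ico] at hx; omega
    have hdesc : (2 * r).factorial * (n + r + 1).choose (2 * r)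
        = (n + r + 1).descFactorial (2 * r) :=
      (Nat.descFactorial_eq_factorial_mul_choose _ _).symm
    have hN : (n + r + 1) ^ (2 * r) < (2 * m) ^ (2 * r) :=
      Nat.pow_lt_pow_left (by omega) (by omega)
    calc (n + r + 1).choose (2 * r) * m.factorial
        = ((n + r + 1).descFactorial (2 * r)) *
          ((∏ x ∈ Ico (2 * r + 1) (4 * r + 1), x) * (∏ x ∈ Ico (4 * r + 1) (m + 1), x)) := by
          rw [hmfac, ← hdesc]; ring
      _ ≤ (n + r + 1) ^ (2 * r) *
          ((∏ x ∈ Ico (2 * r + 1) (4 * r + 1), x) * (∏ x ∈ Ico (4 * r + 1) (m + 1), x)) :=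
          Nat.mul_le_mul_right _ (Nat.descFactorial_le_pow _ _)
      _ < (2 * m) ^ (2 * r) *
          ((∏ x ∈ Ico (2 * r + 1) (4 * r + 1), x) * (∏ x ∈ Ico (4 * r + 1) (m + 1), x)) :=
          (Nat.mul_lt_mul_right (Nat.mul_pos hposA hposB)).mpr hN
      _ = m ^ (2 * r) * ((2 ^ (2 * r) * ∏ x ∈ Ico (2 * r + 1) (4 * r + 1), x) *
          (∏ x ∈ Ico (4 * r + 1) (m + 1), x)) := by rw [mul_pow]; ring
      _ ≤ m ^ (2 * r) * (m ^ (2 * r) * m ^ (m - 4 * r)) :=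
          Nat.mul_le_mul_left _ (Nat.mul_le_mul hA hB)
      _ = m ^ m := by
          rw [← pow_add, ← pow_add]
          congr 1
          omega
  rw [lt_div_iff₀ (by positivity)]
  exact_mod_cast hkey
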